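/- arXiv:1007.4329 — 4 statements merged into one kernel-verified Lean document; each statement's English description precedes it below -/
import Mathlib

section
/- Lifting property: let B : U' × V' → W be an (R,S)-bimap, P a left R-module, and α : P → U' an R-linear map. Then there exists a unique adjoint-morphism (α, α⃗) from the versor bimap ⧹ : P × Hom_R(P,W) → W to B whose left component is α; explicitly α⃗ : V' → Hom_R(P,W) is given by α⃗(v') = B(α(-), v'). -/
open Function MulOpposite

universe u

structure Bimap (R S : Type*) (U V W : Type*) [Ring R] [Ring S]
    [AddCommGroup U] [AddCommGroup V] [AddCommGroup W]
    [Module R U] [Module Sᵐᵒᵖ V] [Module R W] [Module Sᵐᵒᵖ W] where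
  toFun : U → V → W
  add_left : ∀ u u' v, toFun (u + u') v = toFun u v + toFun u' v
  add_right : ∀ u v v', toFun u (v + v') = toFun u v + toFun u v'
  smul_left : ∀ (r : R) (u : U) (v : V), toFun (r • u) v = r • toFun u v
  smul_right : ∀ (s : Sᵐᵒᵖ) (u : U) (v : V), toFun u (s • v) = s • toFun u v

/-- `(f, g)` is an adjoint-morphism from `B` to `C`. -/
def IsAdjoint {R S U V U' V' W : Type*} [Ring R] [Ring S]
    [AddCommGroup U] [AddCommGroup V] [AddCommGroup U'] [AddCommGroup V']
    [AddCommGroup W]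
    [Module R U] [Module Sᵐᵒᵖ V] [Module R U'] [Module Sᵐᵒᵖ V']
    [Module R W] [Module Sᵐᵒᵖ W]
    (B : Bimap R S U V W) (C : Bimap R S U' V' W)
    (f : U →ₗ[R] U') (g : V' →ₗ[Sᵐᵒᵖ] V) : Prop :=
  ∀ (uu : U) (v' : V'), C.toFun (f uu) v' = B.toFun uu (g v')

variable {R S P U' V' W : Type*} [Ring R] [Ring S]
  [AddCommGroup P] [AddCommGroup U'] [AddCommGroup V'] [AddCommGroup W]
  [Module R P] [Module R U'] [Module Sᵐᵒᵖ V']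
  [Module R W] [Module Sᵐᵒᵖ W] [SMulCommClass R Sᵐᵒᵖ W]

/-- The versor bimap `⧹ : P × Hom_R(P, W) → W`, `(p, τ) ↦ τ p`. -/
def versor (R S : Type*) (P W : Type*) [Ring R] [Ring S]
    [AddCommGroup P] [AddCommGroup W] [Module R P] [Module R W]
    [Module Sᵐᵒᵖ W] [SMulCommClass R Sᵐᵒᵖ W] :
    Bimap R S P (P →ₗ[R] W) W where
  toFun := fun p τ => τ p
  add_left := by intro p p' τ; simp
  add_right := by intro p τ τ'; simp
  smul_left := by intro r p τ; simp
  smul_right := by intro s p τ; simp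

theorem stmt10 (B : Bimap R S U' V' W) (α : P →ₗ[R] U') :
    ∃! g : V' →ₗ[Sᵐᵒᵖ] (P →ₗ[R] W),
      IsAdjoint (versor R S P W) B α g ∧
      ∀ (v' : V') (p : P), g v' p = B.toFun (α p) v' := by
  let g : V' →ₗ[Sᵐᵒᵖ] (P →ₗ[R] W) :=
    { toFun := fun v' =>
        { toFun := fun p => B.toFun (α p) v',
          map_add' := fun p q => by simp [B.add_left],
          map_smul' := fun r p => by simp [B.smul_left] },
      map_add' := fun v w => LinearMap.ext fun p => by simp [B.add_right],
      map_smul' := fun s v => LinearMap.ext fun p => by simp [B.smul_right] }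
  exact ⟨g, ⟨fun p v' => rfl, fun v' p => rfl⟩,
    fun g' ⟨hg, hg2⟩ => LinearMap.ext fun v' => LinearMap.ext fun p => hg2 v' p⟩
end

section
/- For a bimap B : U × V → W and any adjoint-morphism (μ⃖, μ⃗) from B to C, and any subset X ⊆ U: X^⊥ ∩ im μ⃗ = μ⃗((μ⃖(X))^⊥), where X^⊥ = {v ∈ V : X B v = 0} is computed in B and (μ⃖(X))^⊥ = {v' ∈ V' : μ⃖(X) C v' = 0} is computed in C. -/
open Function MulOpposite

universe u

variable {R S U V U' V' W : Type*} [Ring R] [Ring S]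
  [AddCommGroup U] [AddCommGroup V] [AddCommGroup U'] [AddCommGroup V'] [AddCommGroup W]
  [Module R U] [Module Sᵐᵒᵖ V] [Module R U'] [Module Sᵐᵒᵖ V'] [Module R W] [Module Sᵐᵒᵖ W]

theorem stmt13 (B : Bimap R S U V W) (C : Bimap R S U' V' W)
    (f : U →ₗ[R] U') (g : V' →ₗ[Sᵐᵒᵖ] V) (h : IsAdjoint B C f g)
    (X : Set U) :
    {v : V | ∀ x ∈ X, B.toFun x v = 0} ∩ Set.range g =
      g '' {v' : V' | ∀ x ∈ X, C.toFun (f x) v' = 0} := by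
  ext v
  constructor
  · rintro ⟨hv, v', rfl⟩
    exact ⟨v', fun x hx => (h x v').trans (hv x hx), rfl⟩
  · rintro ⟨v', hv', rfl⟩
    exact ⟨fun x hx => (h x v').symm.trans (hv' x hx), v', rfl⟩
end

section
/- Let B, C be nondegenerate bimaps into W and (μ⃖, μ⃗) : B → C an adjoint-morphism. Then the conditions (ker μ⃖)^⊥ = im μ⃗ and (ker μ⃗)^⊤ = im μ⃖ hold if and only if the inclusions (ker μ⃖)^⊥ ⊆ im μ⃗ and (ker μ⃗)^⊤ ⊆ im μ⃖ hold, and these are further equivalent to: ker μ⃖, im μ⃖ are ⊥⊤-stable and ker μ⃗, im μ⃗ are ⊤⊥-stable (i.e., ker μ⃖ = (ker μ⃖)^{⊥⊤}, im μ⃖ = (im μ⃖)^{⊥⊤}, ker μ⃗ = (ker μ⃗)^{⊤⊥}, im μ⃗ = (im μ⃗)^{⊤⊥}). -/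
open Function MulOpposite

universe u

variable {R S U V U' V' W : Type*} [Ring R] [Ring S]
  [AddCommGroup U] [AddCommGroup V] [AddCommGroup U'] [AddCommGroup V'] [AddCommGroup W]
  [Module R U] [Module Sᵐᵒᵖ V] [Module R U'] [Module Sᵐᵒᵖ V'] [Module R W] [Module Sᵐᵒᵖ W]

/-- The perp of a subset of the left module. -/
def perpSet {R S U V W : Type*} [Ring R] [Ring S]
    [AddCommGroup U] [AddCommGroup V] [AddCommGroup W]
    [Module R U] [Module Sᵐᵒᵖ V] [Module R W] [Module Sᵐᵒᵖ W]
    (B : Bimap R S U V W) (X : Set U) : Set V :=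
  {v | ∀ x ∈ X, B.toFun x v = 0}

/-- The top of a subset of the right module. -/
def topSet {R S U V W : Type*} [Ring R] [Ring S]
    [AddCommGroup U] [AddCommGroup V] [AddCommGroup W]
    [Module R U] [Module Sᵐᵒᵖ V] [Module R W] [Module Sᵐᵒᵖ W]
    (B : Bimap R S U V W) (Y : Set V) : Set U :=
  {u | ∀ y ∈ Y, B.toFun u y = 0}

lemma Bimap.zero_left {R S U V W : Type*} [Ring R] [Ring S]
    [AddCommGroup U] [AddCommGroup V] [AddCommGroup W]
    [Module R U] [Module Sᵐᵒᵖ V] [Module R W] [Module Sᵐᵒᵖ W]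
    (B : Bimap R S U V W) (v : V) : B.toFun 0 v = 0 := by
  have := B.smul_left (0 : R) 0 v
  simpa using this

lemma Bimap.zero_right {R S U V W : Type*} [Ring R] [Ring S]
    [AddCommGroup U] [AddCommGroup V] [AddCommGroup W]
    [Module R U] [Module Sᵐᵒᵖ V] [Module R W] [Module Sᵐᵒᵖ W]
    (B : Bimap R S U V W) (u : U) : B.toFun u 0 = 0 := by
  have := B.smul_right (0 : Sᵐᵒᵖ) u 0
  simpa using this

theorem stmt15 (B : Bimap R S U V W) (C : Bimap R S U' V' W)
    (f : U →ₗ[R] U') (g : V' →ₗ[Sᵐᵒᵖ] V) (h : IsAdjoint B C f g)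
    (hBr : ∀ v : V, (∀ u : U, B.toFun u v = 0) → v = 0)
    (hBl : ∀ u : U, (∀ v : V, B.toFun u v = 0) → u = 0)
    (hCr : ∀ v' : V', (∀ u' : U', C.toFun u' v' = 0) → v' = 0)
    (hCl : ∀ u' : U', (∀ v' : V', C.toFun u' v' = 0) → u' = 0) :
    ((perpSet B {u : U | f u = 0} = Set.range g ∧
        topSet C {v' : V' | g v' = 0} = Set.range f) ↔
      (perpSet B {u : U | f u = 0} ⊆ Set.range g ∧
        topSet C {v' : V' | g v' = 0} ⊆ Set.range f)) ∧
    ((perpSet B {u : U | f u = 0} = Set.range g ∧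
        topSet C {v' : V' | g v' = 0} = Set.range f) ↔
      (topSet B (perpSet B {u : U | f u = 0}) = {u : U | f u = 0} ∧
        topSet C (perpSet C (Set.range f)) = Set.range f ∧
        perpSet C (topSet C {v' : V' | g v' = 0}) = {v' : V' | g v' = 0} ∧
        perpSet B (topSet B (Set.range g)) = Set.range g)) := by
  -- key identities
  have hkf : {u : U | f u = 0} = topSet B (Set.range g) := by
    ext u
    constructor
    · rintro hu y ⟨v', rfl⟩
      rw [← h u v', show f u = 0 from hu, C.zero_left]
    · intro hu
      refine hCl _ fun v' => ?_
      rw [h]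
      exact hu (g v') ⟨v', rfl⟩
  have hkg : {v' : V' | g v' = 0} = perpSet C (Set.range f) := by
    ext v'
    constructor
    · rintro hv x ⟨u, rfl⟩
      rw [h, show g v' = 0 from hv, B.zero_right]
    · intro hv
      refine hBr _ fun u => ?_
      rw [← h]
      exact hv (f u) ⟨u, rfl⟩
  have hsub1 : Set.range g ⊆ perpSet B {u : U | f u = 0} := by
    rintro y ⟨v', rfl⟩ x hx
    rw [← h, show f x = 0 from hx, C.zero_left]
  have hsub2 : Set.range f ⊆ topSet C {v' : V' | g v' = 0} := by
    rintro y ⟨u, rfl⟩ x hx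
    rw [h, show g x = 0 from hx, B.zero_right]
  constructor
  · constructor
    · rintro ⟨h1, h2⟩
      exact ⟨h1.le, h2.le⟩
    · rintro ⟨h1, h2⟩
      exact ⟨le_antisymm h1 hsub1, le_antisymm h2 hsub2⟩
  · constructor
    · rintro ⟨h1, h2⟩
      refine ⟨?_, ?_, ?_, ?_⟩
      · rw [h1, ← hkf]
      · rw [← hkg, h2]
      · rw [h2, ← hkg]
      · rw [← hkf, h1]
    · rintro ⟨_, c2, _, c4⟩
      constructor
      · rw [hkf]; exact c4
      · rw [hkg]; exact c2
end

section
/- Let (μ⃖, μ⃗) : A → B and (ν⃖, ν⃗) : B → C be nondegenerate adjoint-morphisms between nondegenerate bimaps. If (μ⃖, μ⃗) is epic (μ⃖ surjective and μ⃗ injective), then the composite (ν⃖∘μ⃖, μ⃗∘ν⃗) : A → C is also nondegenerate, i.e., (ker ν⃖∘μ⃖)^⊥ = im μ⃗∘ν⃗ and (ker μ⃗∘ν⃗)^⊤ = im ν⃖∘μ⃖. -/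
open Function MulOpposite

universe u

variable {R S U₁ V₁ U₂ V₂ U₃ V₃ W : Type*} [Ring R] [Ring S]
  [AddCommGroup U₁] [AddCommGroup V₁] [AddCommGroup U₂] [AddCommGroup V₂]
  [AddCommGroup U₃] [AddCommGroup V₃] [AddCommGroup W]
  [Module R U₁] [Module Sᵐᵒᵖ V₁] [Module R U₂] [Module Sᵐᵒᵖ V₂]
  [Module R U₃] [Module Sᵐᵒᵖ V₃] [Module R W] [Module Sᵐᵒᵖ W]

theorem stmt19 (A : Bimap R S U₁ V₁ W) (B : Bimap R S U₂ V₂ W)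
    (C : Bimap R S U₃ V₃ W)
    (f₁ : U₁ →ₗ[R] U₂) (g₁ : V₂ →ₗ[Sᵐᵒᵖ] V₁)
    (f₂ : U₂ →ₗ[R] U₃) (g₂ : V₃ →ₗ[Sᵐᵒᵖ] V₂)
    (hA : IsAdjoint A B f₁ g₁) (hB : IsAdjoint B C f₂ g₂)
    (hAr : ∀ v, (∀ u, A.toFun u v = 0) → v = 0)
    (hAl : ∀ u, (∀ v, A.toFun u v = 0) → u = 0)
    (hBr : ∀ v, (∀ u, B.toFun u v = 0) → v = 0)
    (hBl : ∀ u, (∀ v, B.toFun u v = 0) → u = 0)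
    (hCr : ∀ v, (∀ u, C.toFun u v = 0) → v = 0)
    (hCl : ∀ u, (∀ v, C.toFun u v = 0) → u = 0)
    (hμ₁ : {v : V₁ | ∀ u : U₁, f₁ u = 0 → A.toFun u v = 0} = Set.range g₁)
    (hμ₂ : {u : U₂ | ∀ v : V₂, g₁ v = 0 → B.toFun u v = 0} = Set.range f₁)
    (hν₁ : {v : V₂ | ∀ u : U₂, f₂ u = 0 → B.toFun u v = 0} = Set.range g₂)
    (hν₂ : {u : U₃ | ∀ v : V₃, g₂ v = 0 → C.toFun u v = 0} = Set.range f₂)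
    (hepi₁ : Surjective f₁) (hepi₂ : Injective g₁) :
    {v : V₁ | ∀ u : U₁, f₂ (f₁ u) = 0 → A.toFun u v = 0} = Set.range (g₁ ∘ₗ g₂) ∧
    {u : U₃ | ∀ v : V₃, g₁ (g₂ v) = 0 → C.toFun u v = 0} = Set.range (f₂ ∘ₗ f₁) := by
  constructor
  · ext v₁
    constructor
    · intro hv
      -- v₁ ∈ range g₁
      have h1 : v₁ ∈ Set.range g₁ := by
        rw [← hμ₁]
        intro u hu
        exact hv u (by rw [hu, map_zero])
      obtain ⟨v₂, rfl⟩ := h1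
      have h2 : v₂ ∈ Set.range g₂ := by
        rw [← hν₁]
        intro u₂ hu₂
        obtain ⟨u₁, rfl⟩ := hepi₁ u₂
        rw [hA]
        exact hv u₁ hu₂
      obtain ⟨v₃, rfl⟩ := h2
      exact ⟨v₃, rfl⟩
    · rintro ⟨v₃, rfl⟩ u hu
      simp only [LinearMap.coe_comp, Function.comp_apply]
      rw [← hA, ← hB, hu]
      simpa using C.smul_left 0 0 v₃
  · ext u₃
    constructor
    · intro hu
      have h1 : u₃ ∈ Set.range f₂ := by
        rw [← hν₂]
        intro v₃ hv₃
        exact hu v₃ (by rw [hv₃, map_zero])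
      obtain ⟨u₂, rfl⟩ := h1
      obtain ⟨u₁, rfl⟩ := hepi₁ u₂
      exact ⟨u₁, rfl⟩
    · rintro ⟨u₁, rfl⟩ v₃ hv₃
      have hg : g₂ v₃ = 0 := hepi₂ (by rw [hv₃, map_zero])
      simp only [LinearMap.coe_comp, Function.comp_apply]
      rw [hB, hg]
      simpa using B.smul_right 0 (f₁ u₁) 0
end
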